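/- Suppose G is a W₂ graph and F is an independent set of G with |F| = α(G) − 2. Then the complement of G_F = G \ N[F] is not a path of length 2 (i.e., G_F is not a graph on three vertices a,b,c where b is adjacent to neither a nor c but a and c are adjacent). -/

import Mathlib

open Finset SimpleGraph
open scoped Classical

noncomputable section

def IsIndep {V : Type*} (G : SimpleGraph V) (s : Finset V) : Prop :=
  ∀ u ∈ s, ∀ v ∈ s, ¬ G.Adj u v

def indepNum {V : Type*} [Fintype V] (G : SimpleGraph V) : ℕ :=
  (Finset.univ.filter fun s : Finset V => IsIndep G s).sup Finset.card

def indepPoly {V : Type*} [Fintype V] (G : SimpleGraph V) (x : ℚ) : ℚ :=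
  ∑ s ∈ Finset.univ.filter (fun s : Finset V => IsIndep G s), x ^ s.card

def cycleG (n : ℕ) : SimpleGraph (ZMod n) :=
  SimpleGraph.fromRel (fun u v => u - v = 1)

def closedNbhdF {V : Type*} (G : SimpleGraph V) (F : Finset V) : Set V :=
  ↑F ∪ {v | ∃ u ∈ F, G.Adj u v}

def IsW2 {V : Type*} [Fintype V] (G : SimpleGraph V) : Prop :=
  2 ≤ Fintype.card V ∧
  ∀ A B : Finset V, IsIndep G A → IsIndep G B → Disjoint A B →
    ∃ A₀ B₀ : Finset V, IsIndep G A₀ ∧ IsIndep G B₀ ∧ A ⊆ A₀ ∧ B ⊆ B₀ ∧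
      Disjoint A₀ B₀ ∧ A₀.card = _root_.indepNum G ∧ B₀.card = _root_.indepNum G

def IsMaxIndep {V : Type*} (G : SimpleGraph V) (s : Finset V) : Prop :=
  IsIndep G s ∧ ∀ v ∉ s, ¬ IsIndep G (insert v s)

def WellCovered {V : Type*} [Fintype V] (G : SimpleGraph V) : Prop :=
  ∀ s : Finset V, IsMaxIndep G s → s.card = _root_.indepNum G

/-!
Extending the pair `({b}, F)` with the W₂ property yields a maximum independent set `B ⊇ F`
avoiding `b`. Its two vertices outside `F` lie outside `N[F]`, hence are `a` and `c`, which
are adjacent.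
-/

section

variable {V : Type*} {G : SimpleGraph V}

lemma isIndep_singleton (v : V) : IsIndep G {v} := by
  simp [IsIndep]

lemma isIndep_pair {u v : V} (h : ¬ G.Adj u v) : IsIndep G {u, v} := by
  simp only [IsIndep, mem_insert, mem_singleton]
  rintro x (rfl | rfl) y (rfl | rfl) <;> simp_all [G.adj_comm]

lemma IsIndep.card_le_indepNum [Fintype V] {s : Finset V} (hs : IsIndep G s) :
    s.card ≤ _root_.indepNum G :=
  le_sup (f := Finset.card) (mem_filter.mpr ⟨mem_univ s, hs⟩)

lemma IsIndep.notMem_closedNbhdF {F B : Finset V} (hB : IsIndep G B) (hFB : F ⊆ B) {x : V}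
    (hx : x ∈ B \ F) : x ∉ closedNbhdF G F := by
  obtain ⟨hxB, hxF⟩ := mem_sdiff.mp hx
  rintro (hxF' | ⟨u, hu, hux⟩)
  · exact hxF hxF'
  · exact hB u (hFB hu) x hxB hux

lemma IsW2.exists_maximum_superset_notMem [Fintype V] (hG : IsW2 G) {F : Finset V}
    (hF : IsIndep G F) {v : V} (hv : v ∉ F) :
    ∃ B, IsIndep G B ∧ F ⊆ B ∧ B.card = _root_.indepNum G ∧ v ∉ B := by
  obtain ⟨A, B, -, hB, hvA, hFB, hAB, -, hBcard⟩ :=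
    hG.2 {v} F (isIndep_singleton v) hF (disjoint_singleton_left.mpr hv)
  exact ⟨B, hB, hFB, hBcard, disjoint_left.mp hAB (hvA (mem_singleton_self v))⟩

end

/-- if `G` is W₂ and `F` is an independent set with `|F| = α(G) - 2`, then
the complement of `G_F = G \ N[F]` is not a path of length 2: `G_F` is not a graph on
three vertices `a, b, c` with `b` adjacent to neither `a` nor `c`, but `a, c` adjacent. -/
theorem stmt_7 {V : Type*} [Fintype V] (G : SimpleGraph V) (hW2 : IsW2 G)
    (F : Finset V) (hF : IsIndep G F) (hcard : F.card = _root_.indepNum G - 2) :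
    ¬ ∃ a b c : V, a ≠ b ∧ b ≠ c ∧ a ≠ c ∧
      G.Adj a c ∧ ¬ G.Adj a b ∧ ¬ G.Adj b c ∧
      {v : V | v ∉ closedNbhdF G F} = {a, b, c} := by
  rintro ⟨a, b, c, hab, -, hac, hadj, hnab, -, hGF⟩
  have hGF_mem (x : V) : x ∉ closedNbhdF G F ↔ x = a ∨ x = b ∨ x = c := by
    simpa using Set.ext_iff.mp hGF x
  -- `{a, b}` is independent, so `α(G) ≥ 2` and the subtraction in `hcard` does not truncate.
  have hα : F.card + 2 = _root_.indepNum G := by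
    have := (isIndep_pair hnab).card_le_indepNum
    rw [card_pair hab] at this
    omega
  have hbF : b ∉ F := fun hb => (hGF_mem b).2 (Or.inr (Or.inl rfl)) (Or.inl hb)
  obtain ⟨B, hB, hFB, hBcard, hbB⟩ := hW2.exists_maximum_superset_notMem hF hbF
  have hsub : B \ F ⊆ {a, c} := fun x hx => by
    rcases (hGF_mem x).1 (hB.notMem_closedNbhdF hFB hx) with rfl | rfl | rfl
    · exact mem_insert_self x {c}
    · exact absurd (mem_sdiff.mp hx).1 hbB
    · exact mem_insert_of_mem (mem_singleton_self x)
  have hBF : B \ F = {a, c} :=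
    eq_of_subset_of_card_le hsub (by rw [card_sdiff_of_subset hFB, card_pair hac]; omega)
  have haB : a ∈ B := (mem_sdiff.mp (hBF ▸ mem_insert_self a {c})).1
  have hcB : c ∈ B := (mem_sdiff.mp (hBF ▸ mem_insert_of_mem (mem_singleton_self c))).1
  exact hB a haB c hcB hadj
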